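/- arXiv:0712.4329 — 4 statements merged into one kernel-verified Lean document; each statement's English description precedes it below -/
import Mathlib

section
/- Let r₀, r₁, …, r_h be positive integers with d_j := gcd(r₀,…,r_{j-1}) satisfying d₁ > d₂ > ⋯ > d_{h+1} = 1 and (d_j/d_{j+1}) r_j < r_{j+1} for all 1 ≤ j ≤ h−1 (strict generation). Then the numerical semigroup Γ generated by r₀, …, r_h is symmetric; that is, setting c = −r₀ + 1 + Σ_{j=1}^{h} r_j (d_j/d_{j+1} − 1), for every integer z one has z ∈ Γ if and only if c − 1 − z ∉ Γ. -/
/-!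
Write `d j = gcd(r₀, …, r_{j-1})` and `n j = d j / d (j+1)`. Every multiple `z` of `d (k+1)` has a
unique standard representation `z = ∑_{j ≤ k} a j * r j` with `a 0 ∈ ℤ` and `0 ≤ a j < n j` for
`1 ≤ j ≤ k`: the digit `a k` is determined modulo `n k`, because `d k ∣ t * r k ↔ n k ∣ t`.
Strict generation makes `n k * r k` exceed `-r₀ + ∑_{1 ≤ j < k} (n j - 1) r j`, the largest
multiple of `d k` outside `⟨r₀, …, r_{k-1}⟩`, so `n k * r k` lies in that semigroup; this lets an
element of `Γ` carry its excess digits downwards, and shows that `z ∈ Γ` iff `a 0 ≥ 0`. Replacing every digit `a j` by `n j - 1 - a j` (for `j = 0`: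
by `-1 - a 0`) gives the standard representation of `c - 1 - z`, and exactly one of `a 0` and
`-1 - a 0` is nonnegative.
-/

open Finset Function

namespace StrictlyGenerated

variable {r : ℕ → ℕ} {k : ℕ}

def prefixGcd (r : ℕ → ℕ) (k : ℕ) : ℕ := (range k).gcd r

def gcdIndex (r : ℕ → ℕ) (k : ℕ) : ℕ := prefixGcd r k / prefixGcd r (k + 1)

def InSemigroup (r : ℕ → ℕ) (k : ℕ) (z : ℤ) : Prop :=
  ∃ a : ℕ → ℕ, z = ∑ j ∈ range (k + 1), (a j : ℤ) * r j

def IsStandard (r : ℕ → ℕ) (k : ℕ) (a : ℕ → ℤ) : Prop :=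
  ∀ j ∈ Icc 1 k, 0 ≤ a j ∧ a j < gcdIndex r j

def IsStrict (r : ℕ → ℕ) (k : ℕ) : Prop :=
  ∀ j, 1 ≤ j → j + 1 ≤ k → gcdIndex r j * r j < r (j + 1)

/-- Its `j = 0` term is `-r 0`: `gcdIndex r 0 = 0`, as `prefixGcd r 0` is the gcd of the empty
family. -/
def frobenius (r : ℕ → ℕ) (k : ℕ) : ℤ :=
  ∑ j ∈ range (k + 1), ((gcdIndex r j : ℤ) - 1) * r j

def complement (r : ℕ → ℕ) (a : ℕ → ℤ) (j : ℕ) : ℤ := gcdIndex r j - 1 - a j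

lemma prefixGcd_one : prefixGcd r 1 = r 0 := by simp [prefixGcd]

lemma prefixGcd_succ (k : ℕ) : prefixGcd r (k + 1) = Nat.gcd (r k) (prefixGcd r k) := by
  rw [prefixGcd, range_add_one, gcd_insert]
  rfl

lemma prefixGcd_dvd {j : ℕ} (hjk : j < k) : prefixGcd r k ∣ r j :=
  gcd_dvd (mem_range.2 hjk)

lemma prefixGcd_pos (hr0 : 0 < r 0) (hk : 0 < k) : 0 < prefixGcd r k :=
  Nat.pos_of_ne_zero fun h => hr0.ne' (gcd_eq_zero_iff.1 h 0 (mem_range.2 hk))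

lemma gcdIndex_zero : gcdIndex r 0 = 0 := by simp [gcdIndex, prefixGcd]

lemma gcdIndex_mul_prefixGcd_succ (k : ℕ) :
    gcdIndex r k * prefixGcd r (k + 1) = prefixGcd r k := by
  refine Nat.div_mul_cancel ?_
  rw [prefixGcd_succ]
  exact Nat.gcd_dvd_right _ _

lemma gcdIndex_pos (hr0 : 0 < r 0) (hk : 0 < k) : 0 < gcdIndex r k :=
  Nat.pos_of_mul_pos_right ((gcdIndex_mul_prefixGcd_succ k).symm ▸ prefixGcd_pos hr0 hk)

lemma gcdIndex_coprime (hr0 : 0 < r 0) (k : ℕ) :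
    Nat.Coprime (gcdIndex r k) (r k / prefixGcd r (k + 1)) := by
  have h := prefixGcd_succ (r := r) k
  rw [Nat.gcd_comm] at h
  rw [gcdIndex, h]
  exact Nat.coprime_div_gcd_div_gcd (h ▸ prefixGcd_pos hr0 k.succ_pos)

lemma prefixGcd_dvd_mul_iff (hr0 : 0 < r 0) (k : ℕ) (t : ℤ) :
    (prefixGcd r k : ℤ) ∣ t * r k ↔ (gcdIndex r k : ℤ) ∣ t := by
  have hpos : (0 : ℤ) < prefixGcd r (k + 1) := by exact_mod_cast prefixGcd_pos hr0 k.succ_pos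
  have hr : (r k : ℤ) = (r k / prefixGcd r (k + 1) : ℕ) * prefixGcd r (k + 1) := by
    exact_mod_cast (Nat.div_mul_cancel (prefixGcd_dvd (lt_add_one k))).symm
  have hd : (prefixGcd r k : ℤ) = gcdIndex r k * prefixGcd r (k + 1) := by
    exact_mod_cast (gcdIndex_mul_prefixGcd_succ k).symm
  rw [hr, hd, ← mul_assoc, mul_dvd_mul_iff_right hpos.ne']
  exact ⟨(Nat.isCoprime_iff_coprime.2 (gcdIndex_coprime hr0 k)).dvd_of_dvd_mul_right,
    fun h => h.mul_right _⟩

lemma prefixGcd_dvd_sum (a : ℕ → ℤ) (k : ℕ) :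
    (prefixGcd r k : ℤ) ∣ ∑ j ∈ range k, a j * r j :=
  dvd_sum fun _ hj => (Int.natCast_dvd_natCast.2 (prefixGcd_dvd (mem_range.1 hj))).mul_left _

lemma exists_digit (hr0 : 0 < r 0) (hk : 0 < k) {z : ℤ} (hz : (prefixGcd r (k + 1) : ℤ) ∣ z) :
    ∃ c : ℤ, 0 ≤ c ∧ c < gcdIndex r k ∧ (prefixGcd r k : ℤ) ∣ z - c * r k := by
  obtain ⟨w, rfl⟩ := hz
  have hn : (0 : ℤ) < gcdIndex r k := by exact_mod_cast gcdIndex_pos hr0 hk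
  obtain ⟨u, v, hbezout⟩ : ∃ u v : ℤ, (prefixGcd r (k + 1) : ℤ) = r k * u + prefixGcd r k * v :=
    ⟨_, _, by rw [prefixGcd_succ, ← Int.gcd_natCast_natCast]; exact Int.gcd_eq_gcd_ab _ _⟩
  refine ⟨u * w % gcdIndex r k, Int.emod_nonneg _ hn.ne', Int.emod_lt_of_pos _ hn, ?_⟩
  have hsplit : prefixGcd r (k + 1) * w - u * w % gcdIndex r k * r k
      = u * w / gcdIndex r k * gcdIndex r k * r k + prefixGcd r k * (v * w) := by
    rw [hbezout, Int.emod_def]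
    ring
  rw [hsplit]
  exact ((prefixGcd_dvd_mul_iff hr0 k _).2 (dvd_mul_left _ _)).add (dvd_mul_right _ _)

lemma sum_update_last (a : ℕ → ℤ) (c : ℤ) (k : ℕ) :
    ∑ j ∈ range (k + 2), update a (k + 1) c j * r j
      = ∑ j ∈ range (k + 1), a j * r j + c * r (k + 1) := by
  rw [sum_range_succ, update_self]
  congr 1
  exact sum_congr rfl fun j hj => by rw [update_of_ne (mem_range.1 hj).ne]

lemma isStandard_zero (a : ℕ → ℤ) : IsStandard r 0 a := by
  intro j hj
  simp only [mem_Icc] at hj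
  omega

lemma IsStandard.of_succ {a : ℕ → ℤ} (ha : IsStandard r (k + 1) a) : IsStandard r k a :=
  fun j hj => ha j (Icc_subset_Icc_right k.le_succ hj)

lemma IsStandard.update {a : ℕ → ℤ} {c : ℤ} (ha : IsStandard r k a) (hc0 : 0 ≤ c)
    (hc : c < gcdIndex r (k + 1)) : IsStandard r (k + 1) (update a (k + 1) c) := by
  intro j hj
  rcases eq_or_ne j (k + 1) with rfl | hne
  · simpa using ⟨hc0, hc⟩
  · rw [update_of_ne hne]
    exact ha j (by simp only [mem_Icc] at hj ⊢; omega)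

lemma IsStandard.complement {a : ℕ → ℤ} (ha : IsStandard r k a) :
    IsStandard r k (complement r a) := fun j hj => by
  obtain ⟨h0, h1⟩ := ha j hj
  constructor <;> simp only [StrictlyGenerated.complement] <;> omega

lemma complement_zero (a : ℕ → ℤ) : complement r a 0 = -1 - a 0 := by
  simp [complement, gcdIndex_zero]

lemma sum_complement (a : ℕ → ℤ) (k : ℕ) :
    ∑ j ∈ range (k + 1), complement r a j * r j
      = frobenius r k - ∑ j ∈ range (k + 1), a j * r j := by
  rw [frobenius, ← sum_sub_distrib]
  exact sum_congr rfl fun _ _ => by rw [complement]; ring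

theorem exists_isStandard (hr0 : 0 < r 0) :
    ∀ k (z : ℤ), (prefixGcd r (k + 1) : ℤ) ∣ z →
      ∃ a, IsStandard r k a ∧ z = ∑ j ∈ range (k + 1), a j * r j
  | 0, z, hz => by
    rw [prefixGcd_one] at hz
    exact ⟨fun _ => z / r 0, isStandard_zero _, by rw [sum_range_one, Int.ediv_mul_cancel hz]⟩
  | k + 1, z, hz => by
    obtain ⟨c, hc0, hc, hdvd⟩ := exists_digit hr0 k.succ_pos hz
    obtain ⟨a, ha, hsum⟩ := exists_isStandard hr0 k _ hdvd
    exact ⟨update a (k + 1) c, ha.update hc0 hc, by rw [sum_update_last, ← hsum]; ring⟩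

theorem IsStandard.eq_of_sum_eq (hr0 : 0 < r 0) :
    ∀ {k} {a b : ℕ → ℤ}, IsStandard r k a → IsStandard r k b →
      ∑ j ∈ range (k + 1), a j * r j = ∑ j ∈ range (k + 1), b j * r j →
      ∀ j ≤ k, a j = b j
  | 0, a, b, _, _, hsum, j, hj => by
    obtain rfl : j = 0 := by omega
    simpa [hr0.ne'] using hsum
  | k + 1, a, b, ha, hb, hsum, j, hj => by
    rw [sum_range_succ _ (k + 1), sum_range_succ _ (k + 1)] at hsum
    have htop : a (k + 1) = b (k + 1) := by
      have hdvd : (prefixGcd r (k + 1) : ℤ) ∣ (a (k + 1) - b (k + 1)) * r (k + 1) := by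
        have hdiff : (a (k + 1) - b (k + 1)) * r (k + 1)
            = ∑ j ∈ range (k + 1), b j * r j - ∑ j ∈ range (k + 1), a j * r j := by linarith
        rw [hdiff]
        exact (prefixGcd_dvd_sum b (k + 1)).sub (prefixGcd_dvd_sum a (k + 1))
      rw [prefixGcd_dvd_mul_iff hr0] at hdvd
      obtain ⟨ha0, ha1⟩ := ha (k + 1) (by simp)
      obtain ⟨hb0, hb1⟩ := hb (k + 1) (by simp)
      exact sub_eq_zero.1
        (Int.eq_zero_of_abs_lt_dvd hdvd (abs_sub_lt_iff.2 ⟨by linarith, by linarith⟩))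
    rcases (show j ≤ k ∨ j = k + 1 by omega) with hj | rfl
    · exact ha.of_succ.eq_of_sum_eq hr0 hb.of_succ (by rw [htop] at hsum; linarith) j hj
    · exact htop

lemma InSemigroup.nonneg {z : ℤ} (hz : InSemigroup r k z) : 0 ≤ z := by
  obtain ⟨a, rfl⟩ := hz
  positivity

lemma IsStandard.inSemigroup {a : ℕ → ℤ} (ha : IsStandard r k a) (ha0 : 0 ≤ a 0) :
    InSemigroup r k (∑ j ∈ range (k + 1), a j * r j) := by
  have hnonneg : ∀ j ∈ range (k + 1), 0 ≤ a j := fun j hj => by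
    rcases j with _ | j
    · exact ha0
    · exact (ha _ (by simp only [mem_range, mem_Icc] at hj ⊢; omega)).1
  exact ⟨fun j => (a j).toNat,
    sum_congr rfl fun j hj => by rw [Int.toNat_of_nonneg (hnonneg j hj)]⟩

theorem inSemigroup_of_frobenius_lt (hr0 : 0 < r 0) {z : ℤ}
    (hz : (prefixGcd r (k + 1) : ℤ) ∣ z) (hlt : frobenius r k < z) : InSemigroup r k z := by
  obtain ⟨a, ha, rfl⟩ := exists_isStandard hr0 k z hz
  refine ha.inSemigroup (not_lt.1 fun hneg => ?_)
  have hc := (ha.complement.inSemigroup (by rw [complement_zero]; omega)).nonneg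
  rw [sum_complement] at hc
  linarith

lemma IsStrict.of_succ (hs : IsStrict r (k + 1)) : IsStrict r k :=
  fun j h1 h2 => hs j h1 (by omega)

lemma frobenius_succ (k : ℕ) :
    frobenius r (k + 1) = frobenius r k + ((gcdIndex r (k + 1) : ℤ) - 1) * r (k + 1) :=
  sum_range_succ _ _

theorem frobenius_lt (hr0 : 0 < r 0) (hs : IsStrict r k) :
    ∀ m, m + 1 ≤ k → frobenius r m < r (m + 1)
  | 0, _ => by
    have : (0 : ℤ) < r 0 := by exact_mod_cast hr0
    rw [frobenius, sum_range_one, gcdIndex_zero, Nat.cast_zero]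
    linarith [Int.natCast_nonneg (r 1)]
  | m + 1, hm => by
    have ih := frobenius_lt hr0 hs m (by omega)
    have hstep : (gcdIndex r (m + 1) : ℤ) * r (m + 1) < r (m + 2) := by
      exact_mod_cast hs (m + 1) (by omega) hm
    rw [frobenius_succ]
    linarith

theorem inSemigroup_gcdIndex_mul (hr0 : 0 < r 0) (hs : IsStrict r k) {m : ℕ} (hm : m + 1 ≤ k) :
    InSemigroup r m (gcdIndex r (m + 1) * r (m + 1)) := by
  refine inSemigroup_of_frobenius_lt hr0 ((prefixGcd_dvd_mul_iff hr0 (m + 1) _).2 dvd_rfl) ?_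
  have hn : (1 : ℤ) ≤ gcdIndex r (m + 1) := by exact_mod_cast gcdIndex_pos hr0 m.succ_pos
  have hlt := frobenius_lt hr0 hs m hm
  nlinarith [Int.natCast_nonneg (r (m + 1))]

/-- Carrying: a digit `b ≥ n k` of `r k` is traded for `b / n k` copies of `n k * r k`, an element
of the semigroup generated by the earlier `r j`. -/
theorem InSemigroup.exists_isStandard (hr0 : 0 < r 0) :
    ∀ {k} {z : ℤ}, IsStrict r k → InSemigroup r k z →
      ∃ a, IsStandard r k a ∧ 0 ≤ a 0 ∧ z = ∑ j ∈ range (k + 1), a j * r j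
  | 0, _, _, ⟨b, rfl⟩ => ⟨fun j => b j, isStandard_zero _, by positivity, rfl⟩
  | k + 1, _, hs, ⟨b, rfl⟩ => by
    obtain ⟨c, hc⟩ := inSemigroup_gcdIndex_mul hr0 hs le_rfl
    obtain ⟨q, s, hsn, hb⟩ :
        ∃ q s, s < gcdIndex r (k + 1) ∧ b (k + 1) = gcdIndex r (k + 1) * q + s :=
      ⟨_, _, Nat.mod_lt _ (gcdIndex_pos hr0 k.succ_pos), (Nat.div_add_mod _ _).symm⟩
    obtain ⟨a, ha, ha0, hsum⟩ := InSemigroup.exists_isStandard hr0 hs.of_succ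
      ⟨fun j => b j + q * c j, rfl⟩
    refine ⟨update a (k + 1) s, ha.update (by positivity) (by exact_mod_cast hsn),
      by rwa [update_of_ne k.succ_ne_zero.symm], ?_⟩
    rw [sum_update_last, ← hsum, sum_range_succ, hb]
    push_cast
    simp only [add_mul, sum_add_distrib, mul_assoc, ← mul_sum, ← hc]
    ring

theorem inSemigroup_sum_iff (hr0 : 0 < r 0) (hs : IsStrict r k) {a : ℕ → ℤ}
    (ha : IsStandard r k a) :
    InSemigroup r k (∑ j ∈ range (k + 1), a j * r j) ↔ 0 ≤ a 0 := by
  refine ⟨fun h => ?_, ha.inSemigroup⟩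
  obtain ⟨b, hb, hb0, hsum⟩ := h.exists_isStandard hr0 hs
  rwa [ha.eq_of_sum_eq hr0 hb hsum 0 k.zero_le]

theorem inSemigroup_iff_not_frobenius_sub (hr0 : 0 < r 0) (hs : IsStrict r k) {z : ℤ}
    (hz : (prefixGcd r (k + 1) : ℤ) ∣ z) :
    InSemigroup r k z ↔ ¬ InSemigroup r k (frobenius r k - z) := by
  obtain ⟨a, ha, rfl⟩ := exists_isStandard hr0 k z hz
  rw [← sum_complement, inSemigroup_sum_iff hr0 hs ha, inSemigroup_sum_iff hr0 hs ha.complement,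
    complement_zero]
  omega

lemma frobenius_eq (k : ℕ) :
    frobenius r k = -r 0 + ∑ j ∈ Icc 1 k, (r j : ℤ) * ((gcdIndex r j : ℤ) - 1) := by
  rw [frobenius, range_eq_Ico, sum_eq_sum_Ico_succ_bot (by omega : 0 < k + 1), zero_add,
    Ico_add_one_right_eq_Icc, gcdIndex_zero]
  simp only [Nat.cast_zero, zero_sub, neg_one_mul, mul_comm]

end StrictlyGenerated

open StrictlyGenerated

theorem strictly_generated_semigroup_symmetric_general (h : ℕ) (r d : ℕ → ℕ)
    (hpos : ∀ j, j ≤ h → 0 < r j)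
    (hd : ∀ j, 1 ≤ j → j ≤ h + 1 → d j = (Finset.range j).gcd r)
    (hone : d (h + 1) = 1)
    (hstrict : ∀ j, 1 ≤ j → j + 1 ≤ h → (d j / d (j + 1)) * r j < r (j + 1)) :
    ∀ z : ℤ,
      (∃ a : ℕ → ℕ, z = ∑ j ∈ Finset.range (h + 1), (a j : ℤ) * (r j : ℤ)) ↔
      ¬ (∃ a : ℕ → ℕ,
          (-(r 0 : ℤ) + 1 +
              ∑ j ∈ Finset.Icc 1 h, (r j : ℤ) * ((d j / d (j + 1) : ℕ) - 1 : ℤ))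
            - 1 - z
          = ∑ j ∈ Finset.range (h + 1), (a j : ℤ) * (r j : ℤ)) := by
  have hindex : ∀ j ∈ Icc 1 h, d j / d (j + 1) = gcdIndex r j := fun j hj => by
    obtain ⟨h1, h2⟩ := mem_Icc.1 hj
    rw [hd j h1 (by omega), hd (j + 1) (by omega) (by omega)]
    rfl
  have hs : IsStrict r h := fun j h1 h2 => by
    rw [← hindex j (mem_Icc.2 ⟨h1, by omega⟩)]
    exact hstrict j h1 h2
  have hc :
      (-(r 0 : ℤ) + 1 + ∑ j ∈ Icc 1 h, (r j : ℤ) * ((d j / d (j + 1) : ℕ) - 1 : ℤ)) - 1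
        = frobenius r h := by
    rw [sum_congr rfl fun j hj => by rw [hindex j hj], frobenius_eq]
    ring
  have hunit : (prefixGcd r (h + 1) : ℤ) = 1 := by
    rw [prefixGcd, ← hd (h + 1) (by omega) le_rfl, hone, Nat.cast_one]
  intro z
  rw [hc]
  exact inSemigroup_iff_not_frobenius_sub (hpos 0 h.zero_le) hs (hunit ▸ one_dvd z)

/-- Let `r₀, …, r_h` be positive integers whose divisor sequence
`d j = gcd(r₀,…,r_{j-1})` satisfies `d 1 > d 2 > ⋯ > d (h+1) = 1` and the
strict-generation condition `(d j / d (j+1)) * r j < r (j+1)` for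
`1 ≤ j ≤ h − 1`.  Then the numerical semigroup `Γ` generated by `r₀, …, r_h`
is symmetric: with `c = −r₀ + 1 + Σ_{j=1}^{h} r_j (d_j/d_{j+1} − 1)`, for every
integer `z` one has `z ∈ Γ ↔ c − 1 − z ∉ Γ`. -/
theorem strictly_generated_semigroup_symmetric (h : ℕ) (r d : ℕ → ℕ)
    (hpos : ∀ j, j ≤ h → 0 < r j)
    (hd : ∀ j, 1 ≤ j → j ≤ h + 1 → d j = (Finset.range j).gcd r)
    (hdec : ∀ j, 1 ≤ j → j ≤ h → d (j + 1) < d j)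
    (hone : d (h + 1) = 1)
    (hstrict : ∀ j, 1 ≤ j → j + 1 ≤ h → (d j / d (j + 1)) * r j < r (j + 1)) :
    ∀ z : ℤ,
      (∃ a : ℕ → ℕ, z = ∑ j ∈ Finset.range (h + 1), (a j : ℤ) * (r j : ℤ)) ↔
      ¬ (∃ a : ℕ → ℕ,
          (-(r 0 : ℤ) + 1 +
              ∑ j ∈ Finset.Icc 1 h, (r j : ℤ) * ((d j / d (j + 1) : ℕ) - 1 : ℤ))
            - 1 - z
          = ∑ j ∈ Finset.range (h + 1), (a j : ℤ) * (r j : ℤ)) :=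
  strictly_generated_semigroup_symmetric_general h r d hpos hd hone hstrict
end

section
/- With notation as in the previous statement (Γ strictly generated by r₀,…,r_h with divisor sequence d₁ > ⋯ > d_{h+1} = 1), the conductor of Γ (the least c with c + ℕ ⊆ Γ) equals −r₀ + 1 + Σ_{j=1}^{h} r_j (d_j/d_{j+1} − 1). -/
/-!
Write `d k = gcd(r₀, …, r_{k-1})`. The semigroup generated by `r₀, …, r_{k-1}` is `d k` times a
numerical semigroup `Γₖ`, and `Γ_{k+1} = D • Γₖ + ℕ R` with the coprime numbers
`D = d k / d (k+1)` and `R = r k / d (k+1)`. Such a gluing of a semigroup `S` of conductor `c ≤ R`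
has conductor `D c + (D - 1)(R - 1)`. The strictness condition `D r k < r (k+1)` keeps the conductor
of `Γ_{k+1}` below `r (k+1) / d (k+1)`, so the gluing applies again at the next step, and
telescoping the conductors gives the formula.
-/

open Finset

def IsConductor (S : Set ℕ) (c : ℕ) : Prop :=
  IsLeast {m | ∀ n, m ≤ n → n ∈ S} c

def glue (S : Set ℕ) (D R : ℕ) : Set ℕ :=
  {n | ∃ s ∈ S, ∃ A, n = D * s + A * R}

section glue

variable {S : Set ℕ} {c D R : ℕ}

theorem IsConductor.sub_one_notMem (hS : IsConductor S c) (hc : 0 < c) : c - 1 ∉ S :=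
  fun hmem => by
    have : c ≤ c - 1 := hS.2 fun n hn => by
      rcases hn.eq_or_lt with rfl | hlt
      · exact hmem
      · exact hS.1 n (by omega)
    omega

theorem mem_glue_of_le (hD : 0 < D) (hR : 0 < R) (hRD : R.Coprime D) (hS : ∀ n, c ≤ n → n ∈ S)
    {n : ℕ} (hn : D * c + (D - 1) * (R - 1) ≤ n) : n ∈ glue S D R := by
  -- Take `A < D` with `A R ≡ n [MOD D]`; then `n - A R` is a multiple of `D` above `D (c - 1)`.
  obtain ⟨A, hAD, hA⟩ := Nat.exists_mul_mod_eq_of_coprime n hRD hD.ne'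
  obtain ⟨q, hq⟩ : (D : ℤ) ∣ n - A * R := by
    simpa [mul_comm] using (Nat.ModEq.dvd hA : (D : ℤ) ∣ _)
  have hcq : (c : ℤ) ≤ q := by
    have hAD' : (A : ℤ) + 1 ≤ D := by omega
    zify [hD, hR] at hn
    have : (D : ℤ) * (c - 1) < D * q := by rw [← hq]; nlinarith
    have := lt_of_mul_lt_mul_left this (by positivity)
    omega
  lift q to ℕ using (by omega)
  exact ⟨q, hS q (by exact_mod_cast hcq), A, by zify; linarith⟩

theorem IsConductor.add_one_ne_of_mem_glue (hS : IsConductor S c) (hD : 0 < D) (hR : 0 < R)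
    (hRD : R.Coprime D) (hcR : c ≤ R) {n : ℕ} (hn : n ∈ glue S D R) :
    n + 1 ≠ D * c + (D - 1) * (R - 1) := by
  obtain ⟨s, hs, A, rfl⟩ := hn
  intro heq
  have key : (A + 1) * R + D * (s + 1) = D * (c + R) := by
    zify [hD, hR] at heq ⊢
    linear_combination heq
  -- Modulo `D` this forces `A + 1 = m D`; then `m = 1` puts `c - 1` in `S`,
  -- and `m ≥ 2` contradicts `c ≤ R`.
  obtain ⟨m, hm⟩ : D ∣ A + 1 := by
    refine hRD.symm.dvd_of_dvd_mul_right ((Nat.dvd_add_left (dvd_mul_right D (s + 1))).mp ?_)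
    exact key ▸ dvd_mul_right D (c + R)
  have hmR : m * R + (s + 1) = c + R := by
    apply Nat.eq_of_mul_eq_mul_left hD
    rw [← key, hm]
    ring
  obtain rfl | hm2 : m = 1 ∨ 2 ≤ m := by
    rcases m with _ | _ | m
    · simp at hm
    · simp
    · omega
  · exact hS.sub_one_notMem (by omega) (by rwa [show c - 1 = s by omega])
  · nlinarith

theorem IsConductor.glue (hS : IsConductor S c) (hD : 0 < D) (hR : 0 < R) (hRD : R.Coprime D)
    (hcR : c ≤ R) : IsConductor (glue S D R) (D * c + (D - 1) * (R - 1)) := by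
  refine ⟨fun n hn => mem_glue_of_le hD hR hRD hS.1 hn, fun m hm => ?_⟩
  by_contra! hlt
  exact hS.add_one_ne_of_mem_glue hD hR hRD hcR (hm _ (Nat.le_sub_one_of_lt hlt)) (by omega)

end glue

def genSemigroup (r : ℕ → ℕ) (k : ℕ) : Set ℕ :=
  {n | ∃ a : ℕ → ℕ, n = ∑ j ∈ range k, a j * r j}

def reducedGenSemigroup (r : ℕ → ℕ) (k : ℕ) : Set ℕ :=
  {n | (range k).gcd r * n ∈ genSemigroup r k}

section genSemigroup

variable {r : ℕ → ℕ} {k n c : ℕ}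

theorem mem_genSemigroup_succ :
    n ∈ genSemigroup r (k + 1) ↔ ∃ s ∈ genSemigroup r k, ∃ A, n = s + A * r k := by
  constructor
  · rintro ⟨a, rfl⟩
    exact ⟨_, ⟨a, rfl⟩, a k, sum_range_succ _ _⟩
  · rintro ⟨_, ⟨a, rfl⟩, A, rfl⟩
    refine ⟨Function.update a k A, ?_⟩
    rw [sum_range_succ, Function.update_self]
    congr 1
    exact sum_congr rfl fun j hj => by rw [Function.update_of_ne (mem_range.1 hj).ne]

theorem gcd_dvd_of_mem_genSemigroup (hn : n ∈ genSemigroup r k) : (range k).gcd r ∣ n := by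
  obtain ⟨a, rfl⟩ := hn
  exact dvd_sum fun j hj => (gcd_dvd hj).mul_left _

theorem gcd_range_succ : (range (k + 1)).gcd r = Nat.gcd (r k) ((range k).gcd r) := by
  rw [range_add_one, gcd_insert]
  rfl

theorem reducedGenSemigroup_succ (hg : 0 < (range (k + 1)).gcd r) :
    reducedGenSemigroup r (k + 1) = glue (reducedGenSemigroup r k)
      ((range k).gcd r / (range (k + 1)).gcd r) (r k / (range (k + 1)).gcd r) := by
  obtain ⟨e, hge⟩ : (range (k + 1)).gcd r ∣ (range k).gcd r :=
    gcd_mono (range_subset_range.2 k.le_succ)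
  obtain ⟨ρ, hρ⟩ : (range (k + 1)).gcd r ∣ r k := gcd_dvd (self_mem_range_succ k)
  rw [hge, Nat.mul_div_cancel_left _ hg, hρ, Nat.mul_div_cancel_left _ hg]
  ext n
  simp only [reducedGenSemigroup, glue, Set.mem_ofPred_eq, mem_genSemigroup_succ]
  constructor
  · rintro ⟨t, ht, A, htA⟩
    obtain ⟨s, rfl⟩ := gcd_dvd_of_mem_genSemigroup ht
    refine ⟨s, ht, A, Nat.eq_of_mul_eq_mul_left hg ?_⟩
    rw [htA, hge, hρ]
    ring
  · rintro ⟨s, hs, A, rfl⟩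
    exact ⟨_, hs, A, by rw [hge, hρ]; ring⟩

theorem isConductor_reducedGenSemigroup_one : IsConductor (reducedGenSemigroup r 1) 0 := by
  refine ⟨fun n _ => ⟨fun _ => n, ?_⟩, fun m _ => m.zero_le⟩
  simp [mul_comm]

theorem IsConductor.reducedGenSemigroup_succ (hc : IsConductor (reducedGenSemigroup r k) c)
    (hg : 0 < (range k).gcd r) (hrk : 0 < r k) (hcr : (range (k + 1)).gcd r * c ≤ r k) :
    IsConductor (reducedGenSemigroup r (k + 1))
      ((range k).gcd r / (range (k + 1)).gcd r * c +
        ((range k).gcd r / (range (k + 1)).gcd r - 1) *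
          (r k / (range (k + 1)).gcd r - 1)) := by
  have hg' : 0 < (range (k + 1)).gcd r := gcd_range_succ ▸ Nat.gcd_pos_of_pos_right _ hg
  have hdvd : (range (k + 1)).gcd r ∣ (range k).gcd r := gcd_mono (range_subset_range.2 k.le_succ)
  rw [_root_.reducedGenSemigroup_succ hg']
  refine hc.glue (Nat.div_pos (Nat.le_of_dvd hg hdvd) hg')
    (Nat.div_pos (Nat.le_of_dvd hrk (gcd_dvd (self_mem_range_succ k))) hg') ?_
    ((Nat.le_div_iff_mul_le hg').2 (by rwa [mul_comm]))
  rw [gcd_range_succ]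
  exact Nat.coprime_div_gcd_div_gcd (gcd_range_succ ▸ hg')

end genSemigroup

theorem exists_isConductor_reducedGenSemigroup (h : ℕ) (r d : ℕ → ℕ)
    (hpos : ∀ j, j ≤ h → 0 < r j)
    (hd : ∀ j, 1 ≤ j → j ≤ h + 1 → d j = (range j).gcd r)
    (hstrict : ∀ j, 1 ≤ j → j + 1 ≤ h → (d j / d (j + 1)) * r j < r (j + 1))
    (k : ℕ) (hk : 1 ≤ k) (hkh : k ≤ h + 1) :
    ∃ c, IsConductor (reducedGenSemigroup r k) c ∧
      (d k * c : ℤ) = -(r 0 : ℤ) + d k +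
        ∑ j ∈ Ico 1 k, (r j : ℤ) * ((d j / d (j + 1) : ℕ) - 1 : ℤ) ∧
      (k ≤ h → d k * c < r k) := by
  have hdpos : ∀ j, 1 ≤ j → j ≤ h + 1 → 0 < d j := fun j hj hjh => by
    rw [hd j hj hjh]
    exact Nat.pos_of_ne_zero fun h0 => (hpos 0 (by omega)).ne' (gcd_eq_zero_iff.1 h0 0 (by simpa))
  induction k, hk using Nat.le_induction with
  | base =>
    have hd1 : d 1 = r 0 := by simpa using hd 1 le_rfl (by omega)
    exact ⟨0, isConductor_reducedGenSemigroup_one, by simp [hd1],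
      fun h1 => by simpa using hpos 1 h1⟩
  | succ k hk ih =>
    obtain ⟨c, hc, hformula, hcr⟩ := ih (by omega)
    have hdk : d k = (range k).gcd r := hd k hk (by omega)
    have hdk' : d (k + 1) = (range (k + 1)).gcd r := hd (k + 1) (by omega) hkh
    have hd' : 0 < d (k + 1) := hdpos (k + 1) (by omega) hkh
    obtain ⟨D, hdD⟩ : d (k + 1) ∣ d k := hdk ▸ hdk' ▸ gcd_mono (range_subset_range.2 k.le_succ)
    obtain ⟨R, hrR⟩ : d (k + 1) ∣ r k := hdk' ▸ gcd_dvd (self_mem_range_succ k)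
    have hDdiv : d k / d (k + 1) = D := by rw [hdD, Nat.mul_div_cancel_left _ hd']
    have hRdiv : r k / d (k + 1) = R := by rw [hrR, Nat.mul_div_cancel_left _ hd']
    have hDpos : 0 < D := Nat.pos_of_mul_pos_left (hdD ▸ hdpos k hk (by omega))
    have hRpos : 0 < R := Nat.pos_of_mul_pos_left (hrR ▸ hpos k (by omega))
    have hDcR : D * c < R := Nat.lt_of_mul_lt_mul_left (a := d (k + 1)) <| by
      rw [← mul_assoc, ← hdD, ← hrR]
      exact hcr (by omega)
    refine ⟨D * c + (D - 1) * (R - 1), ?_, ?_, fun hkh' => ?_⟩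
    · have hcr' : d (k + 1) * c ≤ r k := by rw [hrR]; exact Nat.mul_le_mul_left _ (by nlinarith)
      have := hc.reducedGenSemigroup_succ (hdk ▸ hdpos k hk (by omega)) (hpos k (by omega))
        (hdk' ▸ hcr')
      rwa [← hdk, ← hdk', hDdiv, hRdiv] at this
    · rw [sum_Ico_succ_top hk, hDdiv]
      push_cast [Nat.cast_sub (Nat.one_le_iff_ne_zero.2 hDpos.ne'),
        Nat.cast_sub (Nat.one_le_iff_ne_zero.2 hRpos.ne'), hdD, hrR] at hformula ⊢
      linear_combination hformula
    · have hlt : D * c + (D - 1) * (R - 1) < D * R := by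
        obtain ⟨D', rfl⟩ := Nat.exists_eq_add_of_lt hDpos
        obtain ⟨R', rfl⟩ := Nat.exists_eq_add_of_lt hRpos
        simp only [zero_add, add_tsub_cancel_right] at hDcR ⊢
        nlinarith
      calc d (k + 1) * (D * c + (D - 1) * (R - 1))
          < d (k + 1) * (D * R) := Nat.mul_lt_mul_of_pos_left hlt hd'
        _ = d k / d (k + 1) * r k := by rw [hDdiv, hrR]; ring
        _ < r (k + 1) := hstrict k hk hkh'

theorem strictly_generated_semigroup_conductor_general (h : ℕ) (r d : ℕ → ℕ)
    (hpos : ∀ j, j ≤ h → 0 < r j)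
    (hd : ∀ j, 1 ≤ j → j ≤ h + 1 → d j = (Finset.range j).gcd r)
    (hone : d (h + 1) = 1)
    (hstrict : ∀ j, 1 ≤ j → j + 1 ≤ h → (d j / d (j + 1)) * r j < r (j + 1)) :
    ∃ c : ℕ,
      (c : ℤ) = -(r 0 : ℤ) + 1 +
          ∑ j ∈ Finset.Icc 1 h, (r j : ℤ) * ((d j / d (j + 1) : ℕ) - 1 : ℤ) ∧
      IsLeast {m : ℕ | ∀ n : ℕ, m ≤ n →
        ∃ a : ℕ → ℕ, n = ∑ j ∈ Finset.range (h + 1), a j * r j} c := by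
  obtain ⟨c, hc, hformula, -⟩ :=
    exists_isConductor_reducedGenSemigroup h r d hpos hd hstrict (h + 1) (by omega) le_rfl
  have hreduced : reducedGenSemigroup r (h + 1) = genSemigroup r (h + 1) := by
    simp [reducedGenSemigroup, ← hd (h + 1) (by omega) le_rfl, hone]
  rw [hreduced] at hc
  exact ⟨c, by simpa [hone, Ico_add_one_right_eq_Icc] using hformula, hc⟩

/-- Let `Γ` be the numerical semigroup strictly generated by `r₀, …, r_h`
(divisor sequence `d j = gcd(r₀,…,r_{j-1})` strictly decreasing to
`d (h+1) = 1`, and `(d j / d (j+1)) * r j < r (j+1)` for `1 ≤ j ≤ h−1`).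
Then the conductor of `Γ` (the least `c` with `c + ℕ ⊆ Γ`) equals
`−r₀ + 1 + Σ_{j=1}^{h} r_j (d_j/d_{j+1} − 1)`. -/
theorem strictly_generated_semigroup_conductor (h : ℕ) (r d : ℕ → ℕ)
    (hpos : ∀ j, j ≤ h → 0 < r j)
    (hd : ∀ j, 1 ≤ j → j ≤ h + 1 → d j = (Finset.range j).gcd r)
    (hdec : ∀ j, 1 ≤ j → j ≤ h → d (j + 1) < d j)
    (hone : d (h + 1) = 1)
    (hstrict : ∀ j, 1 ≤ j → j + 1 ≤ h → (d j / d (j + 1)) * r j < r (j + 1)) :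
    ∃ c : ℕ,
      (c : ℤ) = -(r 0 : ℤ) + 1 +
          ∑ j ∈ Finset.Icc 1 h, (r j : ℤ) * ((d j / d (j + 1) : ℕ) - 1 : ℤ) ∧
      IsLeast {m : ℕ | ∀ n : ℕ, m ≤ n →
        ∃ a : ℕ → ℕ, n = ∑ j ∈ Finset.range (h + 1), a j * r j} c :=
  strictly_generated_semigroup_conductor_general h r d hpos hd hone hstrict
end

section
/- A numerical semigroup Γ strictly generated by a sequence r₀,…,r_h (with strictly decreasing divisor sequence ending at 1) is a free numerical semigroup: every element z ∈ Γ admits a unique representation z = Σ_{j=0}^{h} a_j r_j with a₀ ∈ ℕ and 0 ≤ a_j < d_j/d_{j+1} for 1 ≤ j ≤ h. -/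
/-!
Write `dⱼ` for the gcd of `r₀, …, r_{j-1}` and `nⱼ = dⱼ / d_{j+1}`. Since
`gcd (rⱼ, dⱼ) = d_{j+1}`, the residues of `a rⱼ` modulo `dⱼ` for `a < nⱼ` are pairwise distinct
and cover all multiples of `d_{j+1}`. Reducing the top coefficient modulo `nⱼ` therefore gives
uniqueness, and gives existence as soon as `nⱼ rⱼ` lies in the semigroup generated by
`r₀, …, r_{j-1}`. That holds because every multiple of `dⱼ` that is at least
`Σ_{1 ≤ i < j} (nᵢ - 1) rᵢ` is representable, and the strictness condition makes this bound
smaller than `rⱼ`.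
-/

open Finset

theorem Nat.exists_lt_div_gcd_mul_modEq {r m n : ℕ} (hm : 0 < m) (hn : Nat.gcd r m ∣ n) :
    ∃ a < m / Nat.gcd r m, a * r ≡ n [MOD m] := by
  obtain ⟨c, rfl⟩ := hn
  have hgm : Nat.gcd r m ∣ m := Nat.gcd_dvd_right r m
  have hgpos : 0 < Nat.gcd r m := Nat.gcd_pos_of_pos_right r hm
  have hq : 0 < m / Nat.gcd r m := Nat.div_pos (Nat.le_of_dvd hm hgm) hgpos
  obtain ⟨x, hx⟩ : ∃ x, x * r ≡ Nat.gcd r m * c [MOD m] := by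
    rcases (Nat.le_of_dvd hm hgm).lt_or_eq with hlt | heq
    · obtain ⟨y, -, hy⟩ := Nat.exists_mul_mod_eq_gcd hlt
      refine ⟨y * c, ?_⟩
      have hy' : r * y ≡ Nat.gcd r m [MOD m] := by rw [Nat.ModEq, hy, Nat.mod_eq_of_lt hlt]
      simpa only [mul_comm, mul_left_comm] using hy'.mul_right c
    · exact ⟨0, by rw [heq, zero_mul]; exact (Nat.modEq_zero_iff_dvd.2 (dvd_mul_right m c)).symm⟩
  have hperiod : m ∣ m / Nat.gcd r m * r := by
    rw [Nat.div_mul_right_comm hgm, Nat.mul_div_assoc m (Nat.gcd_dvd_left r m)]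
    exact dvd_mul_right m _
  exact ⟨x % (m / Nat.gcd r m), Nat.mod_lt x hq,
    (((Nat.mod_modEq x _).mul_right' r).of_dvd hperiod).trans hx⟩

/-- The `dⱼ` of the statement. -/
def prefixGcd (r : ℕ → ℕ) (j : ℕ) : ℕ := (range j).gcd r

def prefixGcdQuot (r : ℕ → ℕ) (j : ℕ) : ℕ := prefixGcd r j / prefixGcd r (j + 1)

def IsStandardRep (r : ℕ → ℕ) (k : ℕ) (a : ℕ → ℕ) : Prop :=
  ∀ i, 1 ≤ i → i ≤ k → a i < prefixGcdQuot r i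

def threshold (r : ℕ → ℕ) (k : ℕ) : ℕ := ∑ i ∈ Icc 1 k, (prefixGcdQuot r i - 1) * r i

section

variable {r : ℕ → ℕ}

theorem prefixGcd_one : prefixGcd r 1 = r 0 := by simp [prefixGcd]

theorem prefixGcd_succ (j : ℕ) : prefixGcd r (j + 1) = Nat.gcd (r j) (prefixGcd r j) := by
  rw [prefixGcd, range_add_one, gcd_insert]; rfl

theorem prefixGcd_dvd {i j : ℕ} (hij : i < j) : prefixGcd r j ∣ r i :=
  Finset.gcd_dvd (mem_range.2 hij)

theorem prefixGcd_succ_dvd (j : ℕ) : prefixGcd r (j + 1) ∣ prefixGcd r j := by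
  rw [prefixGcd_succ]; exact Nat.gcd_dvd_right _ _

theorem prefixGcd_pos (h0 : 0 < r 0) {j : ℕ} (hj : 0 < j) : 0 < prefixGcd r j :=
  Nat.pos_of_dvd_of_pos (prefixGcd_dvd hj) h0

theorem prefixGcd_dvd_sum (a : ℕ → ℕ) (k : ℕ) : prefixGcd r k ∣ ∑ i ∈ range k, a i * r i :=
  dvd_sum fun _ hi => dvd_mul_of_dvd_right (prefixGcd_dvd (mem_range.1 hi)) _

theorem prefixGcd_div_gcd (j : ℕ) :
    prefixGcd r j / Nat.gcd (r j) (prefixGcd r j) = prefixGcdQuot r j := by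
  rw [prefixGcdQuot, prefixGcd_succ]

theorem prefixGcdQuot_pos (h0 : 0 < r 0) {j : ℕ} (hj : 0 < j) : 0 < prefixGcdQuot r j :=
  Nat.div_pos (Nat.le_of_dvd (prefixGcd_pos h0 hj) (prefixGcd_succ_dvd j))
    (prefixGcd_pos h0 j.succ_pos)

theorem prefixGcd_dvd_prefixGcdQuot_mul (j : ℕ) : prefixGcd r j ∣ prefixGcdQuot r j * r j := by
  rw [prefixGcdQuot, Nat.div_mul_right_comm (prefixGcd_succ_dvd j),
    Nat.mul_div_assoc _ (prefixGcd_dvd j.lt_succ_self)]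
  exact dvd_mul_right _ _

theorem sum_range_succ_update (a : ℕ → ℕ) (k b : ℕ) :
    ∑ i ∈ range (k + 1), Function.update a k b i * r i = ∑ i ∈ range k, a i * r i + b * r k := by
  rw [sum_range_succ, Function.update_self]
  congr 1
  exact sum_congr rfl fun i hi => by rw [Function.update_of_ne (mem_range.1 hi).ne]

theorem IsStandardRep.of_le {k l : ℕ} {a : ℕ → ℕ} (ha : IsStandardRep r l a) (hkl : k ≤ l) :
    IsStandardRep r k a :=
  fun i hi hik => ha i hi (hik.trans hkl)

theorem IsStandardRep.update {k b : ℕ} {a : ℕ → ℕ} (ha : IsStandardRep r k a)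
    (hb : b < prefixGcdQuot r (k + 1)) : IsStandardRep r (k + 1) (Function.update a (k + 1) b) := by
  intro i hi hik
  rcases (Nat.le_succ_iff.1 hik) with hik | rfl
  · rw [Function.update_of_ne (by omega)]; exact ha i hi hik
  · rwa [Function.update_self]

theorem threshold_succ (k : ℕ) :
    threshold r (k + 1) = threshold r k + (prefixGcdQuot r (k + 1) - 1) * r (k + 1) :=
  sum_Icc_succ_top (by omega) _

theorem exists_isStandardRep_of_threshold_le (h0 : 0 < r 0) :
    ∀ k n, prefixGcd r (k + 1) ∣ n → threshold r k ≤ n →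
      ∃ a, IsStandardRep r k a ∧ n = ∑ i ∈ range (k + 1), a i * r i
  | 0, n, hn, _ => by
    obtain ⟨c, rfl⟩ := hn
    exact ⟨fun _ => c, fun _ hi hi0 => by omega, by simp [prefixGcd_one, mul_comm]⟩
  | k + 1, n, hn, hthr => by
    rw [prefixGcd_succ] at hn
    obtain ⟨b, hb, hbn⟩ := Nat.exists_lt_div_gcd_mul_modEq (prefixGcd_pos h0 k.add_one_pos) hn
    rw [prefixGcd_div_gcd] at hb
    rw [threshold_succ] at hthr
    have hbq := Nat.mul_le_mul_right (r (k + 1)) (Nat.le_sub_one_of_lt hb)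
    have hle : b * r (k + 1) ≤ n := by omega
    obtain ⟨a, ha, hsum⟩ := exists_isStandardRep_of_threshold_le h0 k (n - b * r (k + 1))
      ((Nat.modEq_iff_dvd' hle).1 hbn) (by omega)
    refine ⟨Function.update a (k + 1) b, ha.update hb, ?_⟩
    rw [sum_range_succ_update, ← hsum]
    omega

theorem threshold_lt (h0 : 0 < r 0) (h1 : 0 < r 1) :
    ∀ k, (∀ j, 1 ≤ j → j ≤ k → prefixGcdQuot r j * r j < r (j + 1)) → threshold r k < r (k + 1)
  | 0, _ => by simpa [threshold] using h1
  | k + 1, hstrict => by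
    have ih := threshold_lt h0 h1 k fun j hj hjk => hstrict j hj (by omega)
    have hquot : (prefixGcdQuot r (k + 1) - 1) * r (k + 1) + r (k + 1)
        = prefixGcdQuot r (k + 1) * r (k + 1) := by
      rw [← add_one_mul, Nat.sub_one_add_one (prefixGcdQuot_pos h0 k.add_one_pos).ne']
    have := hstrict (k + 1) (by omega) le_rfl
    rw [threshold_succ]
    omega

theorem exists_prefixGcdQuot_mul_eq_sum (h0 : 0 < r 0) (h1 : 0 < r 1) {k : ℕ}
    (hstrict : ∀ j, 1 ≤ j → j ≤ k → prefixGcdQuot r j * r j < r (j + 1)) :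
    ∃ c : ℕ → ℕ, prefixGcdQuot r (k + 1) * r (k + 1) = ∑ i ∈ range (k + 1), c i * r i := by
  obtain ⟨c, -, hc⟩ := exists_isStandardRep_of_threshold_le h0 k _
    (prefixGcd_dvd_prefixGcdQuot_mul (k + 1))
    ((threshold_lt h0 h1 k hstrict).le.trans
      (Nat.le_mul_of_pos_left _ (prefixGcdQuot_pos h0 k.add_one_pos)))
  exact ⟨c, hc⟩

theorem exists_isStandardRep (h0 : 0 < r 0) {h : ℕ}
    (hmem : ∀ k, k + 1 ≤ h →
      ∃ c : ℕ → ℕ, prefixGcdQuot r (k + 1) * r (k + 1) = ∑ i ∈ range (k + 1), c i * r i) :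
    ∀ k, k ≤ h → ∀ a : ℕ → ℕ, ∃ b, IsStandardRep r k b ∧
      ∑ i ∈ range (k + 1), b i * r i = ∑ i ∈ range (k + 1), a i * r i
  | 0, _, a => ⟨a, fun i hi hi0 => by omega, rfl⟩
  | k + 1, hk, a => by
    obtain ⟨c, hc⟩ := hmem k hk
    set q := prefixGcdQuot r (k + 1)
    -- `q * (a (k + 1) / q)` copies of `r (k + 1)` are rewritten in the lower generators via `c`
    obtain ⟨b, hb, hsum⟩ := exists_isStandardRep h0 hmem k (by omega)
      fun i => a i + a (k + 1) / q * c i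
    refine ⟨Function.update b (k + 1) (a (k + 1) % q),
      hb.update (Nat.mod_lt _ (prefixGcdQuot_pos h0 k.add_one_pos)), ?_⟩
    rw [sum_range_succ_update, hsum, sum_range_succ _ (k + 1)]
    simp only [add_mul, sum_add_distrib, mul_assoc, ← mul_sum, ← hc]
    conv_rhs => rw [← Nat.div_add_mod (a (k + 1)) q]
    ring

theorem IsStandardRep.eq_of_sum_eq (h0 : 0 < r 0) :
    ∀ {k : ℕ} {a b : ℕ → ℕ}, IsStandardRep r k a → IsStandardRep r k b →
      ∑ i ∈ range (k + 1), a i * r i = ∑ i ∈ range (k + 1), b i * r i → ∀ i ≤ k, a i = b i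
  | 0, a, b, _, _, hs, i, hi => by
    obtain rfl : i = 0 := by omega
    simpa using Nat.eq_of_mul_eq_mul_right h0 (by simpa using hs)
  | k + 1, a, b, ha, hb, hs, i, hi => by
    rw [sum_range_succ _ (k + 1), sum_range_succ _ (k + 1)] at hs
    have hlow : ∑ i ∈ range (k + 1), a i * r i ≡ ∑ i ∈ range (k + 1), b i * r i
        [MOD prefixGcd r (k + 1)] :=
      (Nat.modEq_zero_iff_dvd.2 (prefixGcd_dvd_sum a _)).trans
        (Nat.modEq_zero_iff_dvd.2 (prefixGcd_dvd_sum b _)).symm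
    have htop : a (k + 1) = b (k + 1) := by
      have hmod := (hlow.add_left_cancel (by rw [hs])).cancel_right_div_gcd
        (prefixGcd_pos h0 k.add_one_pos)
      rw [Nat.gcd_comm, prefixGcd_div_gcd] at hmod
      exact hmod.eq_of_lt_of_lt (ha _ (by omega) le_rfl) (hb _ (by omega) le_rfl)
    rcases (Nat.le_succ_iff.1 hi) with hik | rfl
    · exact eq_of_sum_eq h0 (ha.of_le k.le_succ) (hb.of_le k.le_succ) (by rw [htop] at hs; omega)
        i hik
    · exact htop

end

theorem sum_fin_eq_sum_range_ofNat {n : ℕ} (a : Fin (n + 1) → ℕ) (r : ℕ → ℕ) :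
    ∑ j, a j * r j = ∑ i ∈ range (n + 1), a (Fin.ofNat (n + 1) i) * r i := by
  rw [← Fin.sum_univ_eq_sum_range]; simp

theorem strictly_generated_semigroup_free_general (h : ℕ) (r d : ℕ → ℕ)
    (hpos : ∀ j, j ≤ h → 0 < r j)
    (hd : ∀ j, 1 ≤ j → j ≤ h + 1 → d j = (Finset.range j).gcd r)
    (hstrict : ∀ j, 1 ≤ j → j + 1 ≤ h → (d j / d (j + 1)) * r j < r (j + 1)) :
    ∀ z : ℕ, (∃ a : Fin (h + 1) → ℕ, z = ∑ j, a j * r (j : ℕ)) →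
      ∃! a : Fin (h + 1) → ℕ,
        (∀ j : Fin (h + 1), 1 ≤ (j : ℕ) → a j < d (j : ℕ) / d ((j : ℕ) + 1)) ∧
        z = ∑ j, a j * r (j : ℕ) := by
  rintro z ⟨a, rfl⟩
  have h0 : 0 < r 0 := hpos 0 h.zero_le
  have hquot : ∀ j, 1 ≤ j → j ≤ h → d j / d (j + 1) = prefixGcdQuot r j := fun j hj hjh => by
    rw [hd j hj (by omega), hd (j + 1) (by omega) (by omega)]; rfl
  have hmem : ∀ k, k + 1 ≤ h →
      ∃ c : ℕ → ℕ, prefixGcdQuot r (k + 1) * r (k + 1) = ∑ i ∈ range (k + 1), c i * r i :=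
    fun k hk => exists_prefixGcdQuot_mul_eq_sum h0 (hpos 1 (by omega))
      fun j hj hjk => hquot j hj (by omega) ▸ hstrict j hj (by omega)
  obtain ⟨b, hb, hsum⟩ := exists_isStandardRep h0 hmem h le_rfl fun i => a (Fin.ofNat (h + 1) i)
  refine ⟨fun j => b j, ⟨fun j hj => hquot j hj j.is_le ▸ hb j hj j.is_le, ?_⟩, ?_⟩
  · rw [sum_fin_eq_sum_range_ofNat a, ← hsum, ← Fin.sum_univ_eq_sum_range]
  · rintro y ⟨hy, hys⟩
    have hy' : IsStandardRep r h fun i => y (Fin.ofNat (h + 1) i) := fun i hi hih => by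
      simpa [Nat.mod_eq_of_lt (Nat.lt_succ_of_le hih), hquot i hi hih] using
        hy (Fin.ofNat (h + 1) i) (by simpa [Nat.mod_eq_of_lt (Nat.lt_succ_of_le hih)])
    funext j
    simpa using hy'.eq_of_sum_eq h0 hb
      (by rw [← sum_fin_eq_sum_range_ofNat, ← hys, hsum, ← sum_fin_eq_sum_range_ofNat]) j j.is_le

/-- A numerical semigroup strictly generated by `r₀, …, r_h` (with strictly
decreasing divisor sequence `d j = gcd(r₀,…,r_{j-1})` ending at `d (h+1) = 1`)
is free: every element `z` of the semigroup admits a unique representation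
`z = Σ_{j=0}^{h} a_j r_j` with `a₀ ∈ ℕ` and `a_j < d_j/d_{j+1}` for
`1 ≤ j ≤ h`. -/
theorem strictly_generated_semigroup_free (h : ℕ) (r d : ℕ → ℕ)
    (hpos : ∀ j, j ≤ h → 0 < r j)
    (hd : ∀ j, 1 ≤ j → j ≤ h + 1 → d j = (Finset.range j).gcd r)
    (hdec : ∀ j, 1 ≤ j → j ≤ h → d (j + 1) < d j)
    (hone : d (h + 1) = 1)
    (hstrict : ∀ j, 1 ≤ j → j + 1 ≤ h → (d j / d (j + 1)) * r j < r (j + 1)) :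
    ∀ z : ℕ, (∃ a : Fin (h + 1) → ℕ, z = ∑ j, a j * r (j : ℕ)) →
      ∃! a : Fin (h + 1) → ℕ,
        (∀ j : Fin (h + 1), 1 ≤ (j : ℕ) → a j < d (j : ℕ) / d ((j : ℕ) + 1)) ∧
        z = ∑ j, a j * r (j : ℕ) :=
  strictly_generated_semigroup_free_general h r d hpos hd hstrict
end

section
/- Let (θ₁; q₁, …, q_h) be a characteristic sequence and let (e_i)_{0≤i≤r} be the associated multiplicity sequence obtained by running the Euclidean algorithm: e₀ = min(θ₁, q₁) repeated appropriately, etc. Then (q₁ − 1)(θ₁ − 1) + Σ_{j=2}^{h} q_j(θ_j − 1) = Σ_{i=0}^{r} e_i(e_i − 1), where θ_j = gcd(θ₁, q₁, …, q_{j-1}). -/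
/-!
On a pair `(a, b)` the Euclidean algorithm yields `Σ e (e - 1) = (a - 1)(b - 1) + gcd a b - 1`:
a subtraction step `(a, b) ↦ (a, b - a)` emits `e = a`, and `a (a - 1)` is exactly the drop
of `(a - 1)(b - 1)`. When the algorithm stops at `θ_j` and brings in `q_j`, the remaining
`θ_j - 1` is traded for `q_j (θ_j - 1) + θ_{j+1} - 1`, and at the end `θ_{h+1} - 1 = 0`.
-/

/-- The multiplicity sequence obtained by the Hamburger–Noether / Euclidean
algorithm from a pair `(a, b)` together with a list of further characteristic
entries: the multiplicity at each step is `min a b`; one subtracts the smaller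
from the larger, and when the two entries agree (an exact division has been
reached) the next characteristic entry is brought in. -/
def hnMultSeq (a b : ℕ) (rest : List ℕ) : List ℕ :=
  if a = 0 ∨ b = 0 then []
  else if a < b then a :: hnMultSeq a (b - a) rest
  else if b < a then b :: hnMultSeq (a - b) b rest
  else
    match rest with
    | [] => [a]
    | q :: rest' => a :: hnMultSeq a q rest'
termination_by (a + b + rest.sum + rest.length)
decreasing_by
  · simp_all; omega
  · simp_all; omega
  · simp_all [List.sum_cons]; omega

/-- `tailConductor θ₂ [q₂, …, q_h] = Σ_{j=2}^{h} q_j (θ_j - 1) + θ_{h+1} - 1`, with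
`θ_{j+1} = gcd θ_j q_j`. -/
def tailConductor : ℕ → List ℕ → ℤ
  | g, [] => (g : ℤ) - 1
  | g, x :: L => (x : ℤ) * ((g : ℤ) - 1) + tailConductor (Nat.gcd g x) L

theorem sum_hnMultSeq (a b : ℕ) (L : List ℕ) (ha : 0 < a) (hb : 0 < b) (hL : ∀ x ∈ L, 0 < x) :
    ((hnMultSeq a b L).map fun e : ℕ => (e : ℤ) * ((e : ℤ) - 1)).sum
      = ((a : ℤ) - 1) * ((b : ℤ) - 1) + tailConductor (Nat.gcd a b) L := by
  induction a, b, L using hnMultSeq.induct with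
  | case1 a b L h => omega
  | case2 a b L h hab ih =>
    rw [hnMultSeq.eq_def, if_neg h, if_pos hab, List.map_cons, List.sum_cons, ih ha (by omega) hL,
      Nat.gcd_sub_self_right hab.le, Nat.cast_sub hab.le]
    ring
  | case3 a b L h hab hba ih =>
    rw [hnMultSeq.eq_def, if_neg h, if_neg hab, if_pos hba, List.map_cons, List.sum_cons,
      ih (by omega) hb hL, Nat.gcd_sub_self_left hba.le, Nat.cast_sub hba.le]
    ring
  | case4 a b h hab hba =>
    obtain rfl : a = b := by omega
    rw [hnMultSeq.eq_def, if_neg h, if_neg hab, if_neg hba]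
    simp only [List.map_cons, List.map_nil, List.sum_cons, List.sum_nil, tailConductor,
      Nat.gcd_self]
    ring
  | case5 a b h hab hba x L ih =>
    obtain rfl : a = b := by omega
    rw [hnMultSeq.eq_def, if_neg h, if_neg hab, if_neg hba]
    simp only [List.map_cons, List.sum_cons, tailConductor, Nat.gcd_self,
      ih ha (hL x List.mem_cons_self) fun y hy => hL y (List.mem_cons_of_mem x hy)]
    ring

theorem tailConductor_range (w : ℕ → ℕ) (m j : ℕ) :
    tailConductor ((Finset.range j).gcd w) ((List.range m).map fun k => w (j + k))
      = ∑ i ∈ Finset.range m, (w (j + i) : ℤ) * (((Finset.range (j + i)).gcd w : ℕ) - 1)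
        + (((Finset.range (j + m)).gcd w : ℕ) - 1 : ℤ) := by
  induction m generalizing j with
  | zero => simp [tailConductor]
  | succ m ih =>
    have hgcd : Nat.gcd ((Finset.range j).gcd w) (w j) = (Finset.range (j + 1)).gcd w := by
      rw [Finset.range_add_one, Finset.gcd_insert]
      exact Nat.gcd_comm _ _
    rw [List.range_succ_eq_map, List.map_cons, List.map_map, tailConductor, add_zero, hgcd,
      Finset.sum_range_succ']
    convert congrArg (fun t => (w j : ℤ) * (((Finset.range j).gcd w : ℕ) - 1) + t) (ih (j + 1))
      using 1
    · simp only [Function.comp_def, Nat.succ_eq_add_one, add_assoc, add_comm 1]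
    · simp only [add_zero, add_assoc, add_comm 1]
      ring

/-- Lipman's conductor formula expressed via the characteristic sequence
`(θ₁; q₁, …, q_h)`: with `θ_j = gcd(θ₁, q₁, …, q_{j-1})` (so `θ_{h+1} = 1`)
and `(e_i)_{0 ≤ i ≤ r}` the multiplicity sequence obtained from
`(θ₁; q₁,…,q_h)` by the Euclidean algorithm,
`(q₁ − 1)(θ₁ − 1) + Σ_{j=2}^{h} q_j (θ_j − 1) = Σ_{i=0}^{r} e_i (e_i − 1)`. -/
theorem lipman_formula_via_characteristic_sequence (θ₁ h : ℕ) (q : ℕ → ℕ)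
    (hh : 1 ≤ h) (hθ : 0 < θ₁)
    (hq : ∀ j, 1 ≤ j → j ≤ h → 0 < q j)
    (w : ℕ → ℕ) (hw : w = fun i => if i = 0 then θ₁ else q i)
    (hone : (Finset.range (h + 1)).gcd w = 1) :
    ((q 1 : ℤ) - 1) * ((θ₁ : ℤ) - 1) +
        ∑ j ∈ Finset.Icc 2 h,
          (q j : ℤ) * ((((Finset.range j).gcd w : ℕ) : ℤ) - 1)
      = ((hnMultSeq θ₁ (q 1) ((List.range (h - 1)).map fun j => q (j + 2))).map
          fun e => (e : ℤ) * ((e : ℤ) - 1)).sum := by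
  have hwq : ∀ j, 1 ≤ j → w j = q j := fun j hj => by simp [hw, Nat.one_le_iff_ne_zero.mp hj]
  have hgcd : Nat.gcd θ₁ (q 1) = (Finset.range 2).gcd w := by
    simp only [Finset.range_add_one, Finset.range_zero, Finset.gcd_insert, Finset.gcd_empty, hw,
      one_ne_zero, if_false, if_true, gcd_zero_right, normalize_eq]
    exact Nat.gcd_comm _ _
  have htail : ((List.range (h - 1)).map fun j => q (j + 2))
      = (List.range (h - 1)).map fun k => w (2 + k) :=
    List.map_congr_left fun k _ => by rw [hwq _ (by omega), add_comm]
  have htail_pos : ∀ x ∈ (List.range (h - 1)).map fun j => q (j + 2), 0 < x := by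
    simp only [List.mem_map, List.mem_range]
    rintro _ ⟨j, hj, rfl⟩
    exact hq (j + 2) (by omega) (by omega)
  -- the statement's `fun e => (e : ℤ) * …` lifts the `List ℕ` to `List ℤ` by the monad coercion
  simp only [bind_pure_comp, List.map_eq_map, List.map_map, Function.comp_def]
  rw [sum_hnMultSeq θ₁ (q 1) _ hθ (hq 1 le_rfl hh) htail_pos, hgcd, htail, tailConductor_range,
    show 2 + (h - 1) = h + 1 by omega, hone, ← Finset.Ico_add_one_right_eq_Icc,
    Finset.sum_Ico_eq_sum_range, show h + 1 - 2 = h - 1 by omega]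
  simp only [hwq _ (Nat.le_add_right_of_le one_le_two), Nat.cast_one, sub_self, add_zero,
    mul_comm ((q 1 : ℤ) - 1)]
end
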